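/- arXiv:2602.07285 — 3 statements merged into one kernel-verified Lean document; each statement's English description precedes it below -/
import Mathlib

section
/- For every k with 1 < k ≤ m and every μ ∈ I_k = (μ_{k−1}, μ_k] ∩ (0,1), the maximal positive predictive value at selection rate μ satisfies p*(μ) = s_k + c_k/μ; equivalently, writing p = p*(μ), one has μ = c_k/(p − s_k), and the corresponding minimal false omission rate satisfies q*(μ) = ((π − c_k)p − s_k π)/(p − s_k − c_k). -/
open Finset

/-!
Single-group setting.  A finite probability space `(Ω, P)`, a binary target `Y` with
base rate `π := P(Y = 1)`, and a calibrated score `S` taking `m > 1` distinct values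
`1 ≥ s_1 > ⋯ > s_m ≥ 0` (here 0-indexed: `s i` is the paper's `s_{i+1}`), each with
positive probability `w i = P(S = s i)`, are—via calibration
`P(Y = 1 ∣ S = s i) = s i`—completely described, for the purposes of classifiers
based on `S`, by the data below.  A (possibly randomized) binary classifier `R`
based on `S` (i.e. `P(R = 1 ∣ S, Y) = P(R = 1 ∣ S)`) is in turn determined by its
selection rule `t i = P(R = 1 ∣ S = s i)`, with `P(R = 1) = ∑ i, w i * t i`,
`P(Y = 1, R = 1) = ∑ i, s i * w i * t i`, `PPV(R) = P(Y = 1 ∣ R = 1)` and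
`FOR(R) = P(Y = 1 ∣ R = 0)` as given below.
-/
structure CalibScore where
  m : ℕ
  s : ℕ → ℝ
  w : ℕ → ℝ
  one_lt_m : 1 < m
  s_nonneg : ∀ i, i < m → 0 ≤ s i
  s_le_one : ∀ i, i < m → s i ≤ 1
  s_desc : ∀ i j, i < j → j < m → s j < s i
  w_pos : ∀ i, i < m → 0 < w i
  w_sum : ∑ i ∈ Finset.range m, w i = 1

namespace CalibScore

/-- Base rate `π = P(Y = 1) = E[S]` (by calibration). -/
noncomputable def pi (D : CalibScore) : ℝ := ∑ i ∈ Finset.range D.m, D.s i * D.w i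

/-- `t` is a selection rule (`t i = P(R = 1 ∣ S = s i)` for a classifier `R` based on `S`). -/
def IsSelRule (D : CalibScore) (t : ℕ → ℝ) : Prop := ∀ i, i < D.m → 0 ≤ t i ∧ t i ≤ 1

/-- Selection rate `μ = P(R = 1)`. -/
noncomputable def selRate (D : CalibScore) (t : ℕ → ℝ) : ℝ :=
  ∑ i ∈ Finset.range D.m, D.w i * t i

/-- `P(Y = 1, R = 1) = ∑ i, s i * P(S = s i) * P(R = 1 ∣ S = s i)` (by calibration). -/
noncomputable def posSel (D : CalibScore) (t : ℕ → ℝ) : ℝ :=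
  ∑ i ∈ Finset.range D.m, D.s i * D.w i * t i

/-- `PPV(R) = P(Y = 1 ∣ R = 1)`. -/
noncomputable def ppv (D : CalibScore) (t : ℕ → ℝ) : ℝ := D.posSel t / D.selRate t

/-- `FOR(R) = P(Y = 1 ∣ R = 0)`. -/
noncomputable def forr (D : CalibScore) (t : ℕ → ℝ) : ℝ :=
  (D.pi - D.posSel t) / (1 - D.selRate t)

/-- `(p, q)` is feasible with selection rate `μ`: attained by a nonconstant
classifier based on `S` with `P(R = 1) = μ`. -/
def FeasibleWith (D : CalibScore) (μ p q : ℝ) : Prop :=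
  0 < μ ∧ μ < 1 ∧ ∃ t, D.IsSelRule t ∧ D.selRate t = μ ∧ D.ppv t = p ∧ D.forr t = q

/-- The feasible region `C`. -/
def Feasible (D : CalibScore) (p q : ℝ) : Prop := ∃ μ, D.FeasibleWith μ p q

/-- `μ_k = ∑_{i ≤ k} P(S = s_i)` (1-based `k`; `μ_0 = 0`). -/
noncomputable def muk (D : CalibScore) (k : ℕ) : ℝ := ∑ i ∈ Finset.range k, D.w i

/-- `c_k = ∑_{i < k} P(S = s_i) (s_i − s_k)` (1-based `k`). -/
noncomputable def ck (D : CalibScore) (k : ℕ) : ℝ :=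
  ∑ i ∈ Finset.range (k - 1), D.w i * (D.s i - D.s (k - 1))

/-- `I_k = (μ_{k−1}, μ_k] ∩ (0, 1)` (1-based `k`). -/
def Ik (D : CalibScore) (k : ℕ) : Set ℝ :=
  Set.Ioc (D.muk (k - 1)) (D.muk k) ∩ Set.Ioo 0 1

/-- `p*(μ)`: the supremum of `p` over pairs `(p, q)` feasible with `μ` having `q ≤ π ≤ p`. -/
noncomputable def pStar (D : CalibScore) (μ : ℝ) : ℝ :=
  sSup {p | ∃ q, D.FeasibleWith μ p q ∧ q ≤ D.pi ∧ D.pi ≤ p}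

/-- `q*(μ)`: the infimum of `q` over pairs `(p, q)` feasible with `μ` having `q ≤ π ≤ p`. -/
noncomputable def qStar (D : CalibScore) (μ : ℝ) : ℝ :=
  sInf {q | ∃ p, D.FeasibleWith μ p q ∧ q ≤ D.pi ∧ D.pi ≤ p}

/-- `p_k = s_k + c_k / μ_k` (1-based `k`), the breakpoint values of the boundary. -/
noncomputable def pkF (D : CalibScore) (k : ℕ) : ℝ := D.s (k - 1) + D.ck k / D.muk k

/-- The boundary formula `q(p) = ((π − c_k) p − s_k π) / (p − s_k − c_k)` on `J_k`
(1-based `k`). -/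
noncomputable def qF (D : CalibScore) (k : ℕ) (p : ℝ) : ℝ :=
  ((D.pi - D.ck k) * p - D.s (k - 1) * D.pi) / (p - D.s (k - 1) - D.ck k)


/-!
At a fixed selection rate `μ`, both `PPV = P(Y = 1, R = 1) / μ` and
`FOR = (π - P(Y = 1, R = 1)) / (1 - μ)` are monotone in `P(Y = 1, R = 1)`, so `p*(μ)` and `q*(μ)`
are both attained by a rule maximising `P(Y = 1, R = 1)` at rate `μ`. Writing
`P(Y = 1, R = 1) - s_k μ = ∑ i, P(S = s_i) (s_i - s_k) t_i`, the terms are bounded by those of the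
threshold rule selecting all scores above `s_k` (and a fraction of `s_k`), whence the maximum is
`c_k + s_k μ` for `μ ∈ [μ_{k-1}, μ_k]`.
-/

variable (D : CalibScore)

lemma s_antitone {i j : ℕ} (hij : i ≤ j) (hj : j < D.m) : D.s j ≤ D.s i := by
  rcases hij.eq_or_lt with rfl | hlt
  · rfl
  · exact (D.s_desc i j hlt hj).le

lemma muk_succ (j : ℕ) : D.muk (j + 1) = D.muk j + D.w j :=
  Finset.sum_range_succ _ _

lemma ck_succ_eq (j : ℕ) :
    D.ck (j + 1) = ∑ i ∈ range j, D.s i * D.w i - D.s j * D.muk j := by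
  simp only [ck, muk, Nat.add_sub_cancel, Finset.mul_sum, ← Finset.sum_sub_distrib]
  exact Finset.sum_congr rfl fun i _ => by ring

lemma ck_succ_pos {j : ℕ} (hj0 : 0 < j) (hj : j < D.m) : 0 < D.ck (j + 1) := by
  simp only [ck, Nat.add_sub_cancel]
  refine Finset.sum_pos (fun i hi => ?_) ⟨0, Finset.mem_range.mpr hj0⟩
  have hi : i < j := Finset.mem_range.mp hi
  exact mul_pos (D.w_pos i (hi.trans hj)) (sub_pos.mpr (D.s_desc i j hi hj))

def thresholdRule (j : ℕ) (θ : ℝ) (i : ℕ) : ℝ :=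
  if i < j then 1 else if i = j then θ else 0

lemma sum_mul_thresholdRule {n j : ℕ} (hj : j < n) (θ : ℝ) (f : ℕ → ℝ) :
    ∑ i ∈ range n, f i * thresholdRule j θ i = ∑ i ∈ range j, f i + f j * θ := by
  rw [← Finset.sum_range_add_sum_Ico _ hj, Finset.sum_range_succ]
  have h_below : ∑ i ∈ range j, f i * thresholdRule j θ i = ∑ i ∈ range j, f i :=
    Finset.sum_congr rfl fun i hi => by
      simp [thresholdRule, Finset.mem_range.mp hi]
  have h_above : ∑ i ∈ Finset.Ico (j + 1) n, f i * thresholdRule j θ i = 0 :=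
    Finset.sum_eq_zero fun i hi => by
      have hi := (Finset.mem_Ico.mp hi).1
      simp [thresholdRule, show ¬ i < j by omega, show i ≠ j by omega]
  rw [h_below, h_above, add_zero]
  simp [thresholdRule]

lemma isSelRule_thresholdRule (j : ℕ) {θ : ℝ} (hθ : θ ∈ Set.Icc 0 1) :
    D.IsSelRule (thresholdRule j θ) := fun i _ => by
  unfold thresholdRule
  split_ifs
  exacts [⟨zero_le_one, le_rfl⟩, hθ, ⟨le_rfl, zero_le_one⟩]

def rulesOfRate (μ : ℝ) : Set (ℕ → ℝ) := {t | D.IsSelRule t ∧ D.selRate t = μ}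

lemma posSel_le_ck_add {j : ℕ} (hj : j < D.m) {t : ℕ → ℝ} (ht : D.IsSelRule t) :
    D.posSel t ≤ D.ck (j + 1) + D.s j * D.selRate t := by
  have h_diff : D.posSel t - D.s j * D.selRate t
      = ∑ i ∈ range D.m, D.w i * (D.s i - D.s j) * t i := by
    simp only [posSel, selRate, Finset.mul_sum, ← Finset.sum_sub_distrib]
    exact Finset.sum_congr rfl fun i _ => by ring
  have h_ck : D.ck (j + 1)
      = ∑ i ∈ range D.m, D.w i * (D.s i - D.s j) * thresholdRule j 0 i := by
    rw [sum_mul_thresholdRule hj, mul_zero, add_zero, ck, Nat.add_sub_cancel]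
  -- Termwise: the weight `s i - s j` is nonnegative exactly where the threshold rule selects.
  have h_term : ∀ i ∈ range D.m,
      D.w i * (D.s i - D.s j) * t i ≤ D.w i * (D.s i - D.s j) * thresholdRule j 0 i := by
    intro i hi
    have hi := Finset.mem_range.mp hi
    have hw := (D.w_pos i hi).le
    obtain ⟨ht0, ht1⟩ := ht i hi
    by_cases hij : i < j
    · have hs : 0 ≤ D.s i - D.s j := sub_nonneg.mpr (D.s_antitone hij.le hj)
      simpa [thresholdRule, hij] using mul_le_mul_of_nonneg_left ht1 (mul_nonneg hw hs)
    · have hs : D.s i - D.s j ≤ 0 := sub_nonpos.mpr (D.s_antitone (not_lt.mp hij) hi)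
      have hθ : thresholdRule j 0 i = 0 := by unfold thresholdRule; split_ifs <;> rfl
      rw [hθ, mul_zero]
      exact mul_nonpos_of_nonpos_of_nonneg (mul_nonpos_of_nonneg_of_nonpos hw hs) ht0
  linarith [Finset.sum_le_sum h_term]

lemma isGreatest_posSel {j : ℕ} (hj : j < D.m) {μ : ℝ}
    (hμ : μ ∈ Set.Icc (D.muk j) (D.muk (j + 1))) :
    IsGreatest (D.posSel '' D.rulesOfRate μ) (D.ck (j + 1) + D.s j * μ) := by
  refine ⟨?_, ?_⟩
  · have hw := D.w_pos j hj
    have hμr : μ ≤ D.muk j + D.w j := D.muk_succ j ▸ hμ.2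
    set θ := (μ - D.muk j) / D.w j
    have hθ : θ ∈ Set.Icc 0 1 :=
      ⟨div_nonneg (by linarith [hμ.1]) hw.le, (div_le_one hw).mpr (by linarith)⟩
    have hwθ : D.w j * θ = μ - D.muk j := mul_div_cancel₀ _ hw.ne'
    refine ⟨thresholdRule j θ, ⟨D.isSelRule_thresholdRule j hθ, ?_⟩, ?_⟩
    · rw [selRate, sum_mul_thresholdRule hj, hwθ, muk]
      ring
    · rw [posSel, sum_mul_thresholdRule hj, mul_assoc, hwθ, ck_succ_eq]
      ring
  · rintro _ ⟨t, ⟨ht, rfl⟩, rfl⟩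
    exact D.posSel_le_ck_add hj ht

lemma selRate_const (μ : ℝ) : D.selRate (fun _ => μ) = μ := by
  rw [selRate, ← Finset.sum_mul, D.w_sum, one_mul]

lemma posSel_const (μ : ℝ) : D.posSel (fun _ => μ) = D.pi * μ := by
  rw [posSel, pi, Finset.sum_mul]

section Optimum

variable {D} {μ M : ℝ}

/-- `q ≤ π ≤ p` holds here because the constant rule `t ≡ μ` has `posSel = π μ ≤ M`. -/
lemma feasibleWith_of_isGreatest (hμ0 : 0 < μ) (hμ1 : μ < 1)
    (hM : IsGreatest (D.posSel '' D.rulesOfRate μ) M) :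
    D.FeasibleWith μ (M / μ) ((D.pi - M) / (1 - μ)) ∧
      (D.pi - M) / (1 - μ) ≤ D.pi ∧ D.pi ≤ M / μ := by
  obtain ⟨⟨t, ⟨ht, hrate⟩, hpos⟩, hle⟩ := hM
  have hconst : D.pi * μ ≤ M :=
    D.posSel_const μ ▸ hle ⟨_, ⟨fun _ _ => ⟨hμ0.le, hμ1.le⟩, D.selRate_const μ⟩, rfl⟩
  have h1μ : 0 < 1 - μ := sub_pos.mpr hμ1
  refine ⟨⟨hμ0, hμ1, t, ht, hrate, ?_, ?_⟩, ?_, ?_⟩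
  · rw [ppv, hrate, hpos]
  · rw [forr, hrate, hpos]
  · rw [div_le_iff₀ h1μ]; linarith
  · rw [le_div_iff₀ hμ0]; exact hconst

lemma pStar_eq_of_isGreatest (hμ0 : 0 < μ) (hμ1 : μ < 1)
    (hM : IsGreatest (D.posSel '' D.rulesOfRate μ) M) : D.pStar μ = M / μ := by
  refine IsGreatest.csSup_eq ⟨?_, ?_⟩
  · obtain ⟨hfeas, hq, hp⟩ := feasibleWith_of_isGreatest hμ0 hμ1 hM
    exact ⟨_, hfeas, hq, hp⟩
  · rintro _ ⟨q, ⟨-, -, t, ht, hrate, rfl, -⟩, -, -⟩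
    rw [ppv, hrate]
    exact div_le_div_of_nonneg_right (hM.2 ⟨t, ⟨ht, hrate⟩, rfl⟩) hμ0.le

lemma qStar_eq_of_isGreatest (hμ0 : 0 < μ) (hμ1 : μ < 1)
    (hM : IsGreatest (D.posSel '' D.rulesOfRate μ) M) :
    D.qStar μ = (D.pi - M) / (1 - μ) := by
  refine IsLeast.csInf_eq ⟨?_, ?_⟩
  · obtain ⟨hfeas, hq, hp⟩ := feasibleWith_of_isGreatest hμ0 hμ1 hM
    exact ⟨_, hfeas, hq, hp⟩
  · rintro _ ⟨p, ⟨-, -, t, ht, hrate, -, rfl⟩, -, -⟩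
    rw [forr, hrate]
    have := hM.2 ⟨t, ⟨ht, hrate⟩, rfl⟩
    exact div_le_div_of_nonneg_right (by linarith) (sub_pos.mpr hμ1).le

end Optimum

end CalibScore

/-- For `1 < k ≤ m` and `μ ∈ I_k`, one has `p*(μ) = s_k + c_k / μ`;
equivalently, writing `p = p*(μ)`, `μ = c_k / (p − s_k)`, and the minimal false
omission rate satisfies `q*(μ) = ((π − c_k) p − s_k π) / (p − s_k − c_k)`.
(Indices are 1-based: the paper's `s_k` is `D.s (k - 1)`.) -/
theorem stmt1 (D : CalibScore) (k : ℕ) (hk : 1 < k) (hkm : k ≤ D.m)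
    (μ : ℝ) (hμ : μ ∈ D.Ik k) :
    D.pStar μ = D.s (k - 1) + D.ck k / μ ∧
    μ = D.ck k / (D.pStar μ - D.s (k - 1)) ∧
    D.qStar μ =
      ((D.pi - D.ck k) * D.pStar μ - D.s (k - 1) * D.pi) /
        (D.pStar μ - D.s (k - 1) - D.ck k) := by
  obtain ⟨j, rfl⟩ : ∃ j, k = j + 1 := ⟨k - 1, by omega⟩
  obtain ⟨⟨hμl, hμr⟩, hμ0, hμ1⟩ := hμ
  simp only [Nat.add_sub_cancel] at hμl ⊢
  have hj : j < D.m := by omega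
  have hM := D.isGreatest_posSel hj ⟨hμl.le, hμr⟩
  rw [CalibScore.pStar_eq_of_isGreatest hμ0 hμ1 hM, CalibScore.qStar_eq_of_isGreatest hμ0 hμ1 hM]
  have hc := D.ck_succ_pos (by omega) hj
  have hp : (D.ck (j + 1) + D.s j * μ) / μ = D.s j + D.ck (j + 1) / μ := by
    field_simp; ring
  rw [hp, add_sub_cancel_left, div_div_eq_mul_div, mul_div_cancel_left₀ _ hc.ne']
  refine ⟨rfl, rfl, ?_⟩
  have h1μ : 1 - μ ≠ 0 := (sub_pos.mpr hμ1).ne'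
  have hden : D.ck (j + 1) / μ - D.ck (j + 1) = D.ck (j + 1) * (1 - μ) / μ := by
    field_simp
  rw [hden, div_eq_div_iff h1μ (by positivity)]
  field_simp
  ring
end

section
/- The feasible region C is star-convex with center (π, π): if (p, q) ∈ C, then for every η ∈ [0,1] the convex combination (η p + (1−η) π, η q + (1−η) π) also belongs to C; moreover if (p,q) is feasible with selection rate μ, then so is each such convex combination. -/
open Finset

/-! Randomizing a classifier with an independent coin of bias `μ = P(R = 1)` keeps the selection
rate and moves `PPV` and `FOR` linearly towards the base rate `π`, because the classifier that
ignores `S` and selects with probability `μ` has `PPV = FOR = π`. -/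

namespace CalibScore

variable (D : CalibScore)

theorem selRate_mul_add_const (t : ℕ → ℝ) (a b : ℝ) :
    D.selRate (fun i => a * t i + b) = a * D.selRate t + b := by
  simp only [selRate, mul_add, Finset.sum_add_distrib, mul_left_comm _ a, ← Finset.mul_sum,
    ← Finset.sum_mul, D.w_sum, one_mul]

theorem posSel_mul_add_const (t : ℕ → ℝ) (a b : ℝ) :
    D.posSel (fun i => a * t i + b) = a * D.posSel t + b * D.pi := by
  simp only [posSel, pi, mul_add, Finset.sum_add_distrib, mul_left_comm _ a, ← Finset.mul_sum,
    ← Finset.sum_mul, mul_comm b]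

theorem isSelRule_convexComb {t : ℕ → ℝ} (ht : D.IsSelRule t) {η c : ℝ}
    (hη : η ∈ Set.Icc (0 : ℝ) 1) (hc : c ∈ Set.Icc (0 : ℝ) 1) :
    D.IsSelRule (fun i => η * t i + (1 - η) * c) := fun i hi => by
  simpa using convex_Icc (0 : ℝ) 1 (ht i hi) hc hη.1 (sub_nonneg.2 hη.2) (by ring)

theorem feasibleWith_convexComb_pi {μ p q : ℝ} (h : D.FeasibleWith μ p q) {η : ℝ}
    (hη : η ∈ Set.Icc (0 : ℝ) 1) :
    D.FeasibleWith μ (η * p + (1 - η) * D.pi) (η * q + (1 - η) * D.pi) := by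
  obtain ⟨hμ0, hμ1, t, ht, rfl, rfl, rfl⟩ := h
  have hrate : D.selRate (fun i => η * t i + (1 - η) * D.selRate t) = D.selRate t := by
    rw [D.selRate_mul_add_const]
    ring
  have hpos := D.posSel_mul_add_const t η ((1 - η) * D.selRate t)
  refine ⟨hμ0, hμ1, _, D.isSelRule_convexComb ht hη ⟨hμ0.le, hμ1.le⟩, hrate, ?_, ?_⟩
  · rw [ppv, ppv, hrate, hpos]
    field_simp
  · have hμ1' : 1 - D.selRate t ≠ 0 := sub_ne_zero.2 hμ1.ne'
    rw [forr, forr, hrate, hpos]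
    field_simp
    ring

end CalibScore

/-- The feasible region `C` is star-convex with center `(π, π)`:
if `(p, q) ∈ C` then for every `η ∈ [0,1]` the convex combination
`(η p + (1 − η) π, η q + (1 − η) π)` also belongs to `C`; moreover, if `(p, q)` is
feasible with selection rate `μ`, then so is each such convex combination. -/
theorem stmt6 (D : CalibScore) (p q : ℝ) :
    (D.Feasible p q → ∀ η ∈ Set.Icc (0 : ℝ) 1,
      D.Feasible (η * p + (1 - η) * D.pi) (η * q + (1 - η) * D.pi)) ∧
    (∀ μ : ℝ, D.FeasibleWith μ p q → ∀ η ∈ Set.Icc (0 : ℝ) 1,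
      D.FeasibleWith μ (η * p + (1 - η) * D.pi) (η * q + (1 - η) * D.pi)) :=
  ⟨fun ⟨μ, h⟩ _ hη => ⟨μ, D.feasibleWith_convexComb_pi h hη⟩,
    fun _ h _ hη => D.feasibleWith_convexComb_pi h hη⟩
end

section
/- If (p,q) ≠ (π,π) is a feasible pair with q ≤ p, attained by a nonconstant classifier based on S with selection rate μ ∈ (0,1), then s_m ≤ q*(μ) ≤ q < π < p ≤ p*(μ) ≤ s_1. -/
open Finset

/-!
Conditioning on `R` writes the base rate as the mixture `π = μ p + (1 - μ) q`, so `π` lies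
strictly between `q` and `p` as soon as `q ≠ p`, and `q = p` would force `(p, q) = (π, π)`.
Every selected unit has score at most `s_1` and every rejected one at least `s_m`, which bounds
all feasible `p` from above by `s_1` and all feasible `q` from below by `s_m`, hence also the
extremal values `p*(μ)` and `q*(μ)`.
-/

namespace CalibScore

variable (D : CalibScore)

lemma s_le_s_zero {i : ℕ} (hi : i < D.m) : D.s i ≤ D.s 0 := by
  rcases Nat.eq_zero_or_pos i with rfl | hpos
  · exact le_rfl
  · exact (D.s_desc 0 i hpos hi).le

lemma s_last_le_s {i : ℕ} (hi : i < D.m) : D.s (D.m - 1) ≤ D.s i := by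
  rcases (Nat.le_sub_one_of_lt hi).eq_or_lt with rfl | hlt
  · exact le_rfl
  · exact (D.s_desc i (D.m - 1) hlt (Nat.sub_lt (by omega) one_pos)).le

lemma pi_sub_posSel (t : ℕ → ℝ) :
    D.pi - D.posSel t = ∑ i ∈ range D.m, D.s i * (D.w i * (1 - t i)) := by
  rw [pi, posSel, ← sum_sub_distrib]
  exact sum_congr rfl fun i _ => by ring

lemma one_sub_selRate (t : ℕ → ℝ) :
    1 - D.selRate t = ∑ i ∈ range D.m, D.w i * (1 - t i) := by
  nth_rw 1 [← D.w_sum]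
  rw [selRate, ← sum_sub_distrib]
  exact sum_congr rfl fun i _ => by ring

lemma posSel_le_mul_selRate {t : ℕ → ℝ} (ht : D.IsSelRule t) :
    D.posSel t ≤ D.s 0 * D.selRate t := by
  rw [posSel, selRate, mul_sum]
  refine sum_le_sum fun i hi => ?_
  rw [mem_range] at hi
  rw [mul_assoc]
  exact mul_le_mul_of_nonneg_right (D.s_le_s_zero hi)
    (mul_nonneg (D.w_pos i hi).le (ht i hi).1)

lemma mul_one_sub_selRate_le {t : ℕ → ℝ} (ht : D.IsSelRule t) :
    D.s (D.m - 1) * (1 - D.selRate t) ≤ D.pi - D.posSel t := by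
  rw [pi_sub_posSel, one_sub_selRate, mul_sum]
  refine sum_le_sum fun i hi => ?_
  rw [mem_range] at hi
  exact mul_le_mul_of_nonneg_right (D.s_last_le_s hi)
    (mul_nonneg (D.w_pos i hi).le (sub_nonneg.2 (ht i hi).2))

lemma ppv_le_s_zero {t : ℕ → ℝ} (ht : D.IsSelRule t) (hμ : 0 < D.selRate t) :
    D.ppv t ≤ D.s 0 :=
  (div_le_iff₀ hμ).2 (D.posSel_le_mul_selRate ht)

lemma s_last_le_forr {t : ℕ → ℝ} (ht : D.IsSelRule t) (hμ : D.selRate t < 1) :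
    D.s (D.m - 1) ≤ D.forr t :=
  (le_div_iff₀ (sub_pos.2 hμ)).2 (D.mul_one_sub_selRate_le ht)

variable {D} {μ p q : ℝ}

lemma FeasibleWith.le_s_zero (h : D.FeasibleWith μ p q) : p ≤ D.s 0 := by
  obtain ⟨hμ0, -, t, ht, rfl, rfl, -⟩ := h
  exact D.ppv_le_s_zero ht hμ0

lemma FeasibleWith.s_last_le (h : D.FeasibleWith μ p q) : D.s (D.m - 1) ≤ q := by
  obtain ⟨-, hμ1, t, ht, rfl, -, rfl⟩ := h
  exact D.s_last_le_forr ht hμ1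

lemma FeasibleWith.pi_eq (h : D.FeasibleWith μ p q) : D.pi = μ * p + (1 - μ) * q := by
  obtain ⟨hμ0, hμ1, t, -, rfl, rfl, rfl⟩ := h
  rw [ppv, forr, mul_div_cancel₀ _ hμ0.ne', mul_div_cancel₀ _ (sub_pos.2 hμ1).ne']
  ring

lemma FeasibleWith.lt_pi_lt (h : D.FeasibleWith μ p q) (hqp : q ≤ p)
    (hne : (p, q) ≠ (D.pi, D.pi)) : q < D.pi ∧ D.pi < p := by
  have hπ := h.pi_eq
  obtain ⟨hμ0, hμ1, -⟩ := h
  have hgap : 0 < p - q := sub_pos.2 <| hqp.lt_of_ne fun hq => hne (by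
    subst hq
    rw [hπ]
    ring_nf)
  have hπq : D.pi - q = μ * (p - q) := by rw [hπ]; ring
  have hpπ : p - D.pi = (1 - μ) * (p - q) := by rw [hπ]; ring
  exact ⟨sub_pos.1 (hπq ▸ mul_pos hμ0 hgap), sub_pos.1 (hpπ ▸ mul_pos (sub_pos.2 hμ1) hgap)⟩

-- No feasible pair is needed: over `ℝ`, `sSup ∅ = 0 ≤ s_1`.
lemma pStar_le_s_zero : D.pStar μ ≤ D.s 0 :=
  Real.sSup_le (fun _ ⟨_, hf, _⟩ => hf.le_s_zero) (D.s_nonneg 0 (Nat.zero_lt_of_lt D.one_lt_m))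

lemma FeasibleWith.le_pStar (h : D.FeasibleWith μ p q) (hq : q ≤ D.pi) (hp : D.pi ≤ p) :
    p ≤ D.pStar μ :=
  le_csSup ⟨D.s 0, fun _ ⟨_, hf, _⟩ => hf.le_s_zero⟩ ⟨q, h, hq, hp⟩

lemma FeasibleWith.s_last_le_qStar (h : D.FeasibleWith μ p q) (hq : q ≤ D.pi)
    (hp : D.pi ≤ p) : D.s (D.m - 1) ≤ D.qStar μ :=
  le_csInf ⟨q, p, h, hq, hp⟩ fun _ ⟨_, hf, _⟩ => hf.s_last_le

lemma FeasibleWith.qStar_le (h : D.FeasibleWith μ p q) (hq : q ≤ D.pi) (hp : D.pi ≤ p) :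
    D.qStar μ ≤ q :=
  csInf_le ⟨D.s (D.m - 1), fun _ ⟨_, hf, _⟩ => hf.s_last_le⟩ ⟨p, h, hq, hp⟩

end CalibScore

/-- If `(p, q) ≠ (π, π)` is a feasible pair with `q ≤ p`, attained
by a nonconstant classifier based on `S` with selection rate `μ ∈ (0, 1)`, then
`s_m ≤ q*(μ) ≤ q < π < p ≤ p*(μ) ≤ s_1`. -/
theorem stmt12 (D : CalibScore) (p q μ : ℝ) (h : D.FeasibleWith μ p q)
    (hqp : q ≤ p) (hne : (p, q) ≠ (D.pi, D.pi)) :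
    D.s (D.m - 1) ≤ D.qStar μ ∧ D.qStar μ ≤ q ∧ q < D.pi ∧
      D.pi < p ∧ p ≤ D.pStar μ ∧ D.pStar μ ≤ D.s 0 := by
  obtain ⟨hq, hp⟩ := h.lt_pi_lt hqp hne
  exact ⟨h.s_last_le_qStar hq.le hp.le, h.qStar_le hq.le hp.le, hq, hp,
    h.le_pStar hq.le hp.le, CalibScore.pStar_le_s_zero⟩
end
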